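/- Let G(x,y) be the graph on vertices u_0,...,u_b, v_0,...,v_b where: u_0 u_i is an edge iff x_i = 1, v_0 v_i is an edge iff y_i = 0, and u_j v_j is an edge for all 0 ≤ j ≤ b. Then G(x,y) is a spanning tree (on its 2b+2 vertices) if and only if x = y. -/

import Mathlib

/-- The graph `G(x,y)` on vertices `u_0,…,u_b` (as `(false, j)`) and `v_0,…,v_b`
(as `(true, j)`), with edges `u_0 u_i` iff `x i = 1`, `v_0 v_i` iff `y i = 0`,
and `u_j v_j` for all `0 ≤ j ≤ b`.  (Here `i : Fin b` names index `i+1 ∈ {1,…,b}`.) -/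
def eqGraph (b : ℕ) (x y : Fin b → Bool) : SimpleGraph (Bool × Fin (b + 1)) :=
  SimpleGraph.fromRel (fun a c =>
    (∃ i : Fin b, a = (false, 0) ∧ c = (false, i.succ) ∧ x i = true) ∨
    (∃ i : Fin b, a = (true, 0) ∧ c = (true, i.succ) ∧ y i = false) ∨
    (∃ j : Fin (b + 1), a = (false, j) ∧ c = (true, j)))

/-!
If `x i = 0` and `y i = 1`, the rung `u_{i+1} v_{i+1}` is a connected component of its own; if
`x i = 1` and `y i = 0`, then `u_0 u_{i+1} v_{i+1} v_0` is a 4-cycle. If `x = y`, every `u_{i+1}`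
is joined to `u_0` either directly or through `v_{i+1} v_0`, so the graph is connected, and each
index `i` contributes exactly one spoke, for `b + (b + 1) = 2b + 1` edges on `2b + 2` vertices:
a connected graph with one edge fewer than vertices is a tree.
-/

open SimpleGraph

variable {b : ℕ} {x y : Fin b → Bool}

lemma eqGraph_adj_rung (j : Fin (b + 1)) : (eqGraph b x y).Adj (false, j) (true, j) := by
  simp [eqGraph]

lemma eqGraph_adj_u_spoke {i : Fin b} (h : x i = true) :
    (eqGraph b x y).Adj (false, 0) (false, i.succ) := by
  simp [eqGraph, h, (Fin.succ_ne_zero i).symm]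

lemma eqGraph_adj_v_spoke {i : Fin b} (h : y i = false) :
    (eqGraph b x y).Adj (true, 0) (true, i.succ) := by
  simp [eqGraph, h, (Fin.succ_ne_zero i).symm]

lemma eqGraph_not_connected {i : Fin b} (hx : x i = false) (hy : y i = true) :
    ¬ (eqGraph b x y).Connected := by
  intro hconn
  obtain ⟨p⟩ := hconn.preconnected (false, i.succ) (false, 0)
  obtain ⟨⟨⟨a, c⟩, hac⟩, -, ha, hc⟩ := p.exists_boundary_dart {(false, i.succ), (true, i.succ)}
    (by simp) (by simp [(Fin.succ_ne_zero i).symm])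
  simp only [Set.mem_insert_iff, Set.mem_singleton_iff] at ha hc
  rw [eqGraph, fromRel_adj] at hac
  rcases ha with rfl | rfl <;> simp_all [Fin.succ_ne_zero]

lemma eqGraph_not_isAcyclic {i : Fin b} (hx : x i = true) (hy : y i = false) :
    ¬ (eqGraph b x y).IsAcyclic := fun hacyc =>
  hacyc (.cons (eqGraph_adj_u_spoke hx) <| .cons (eqGraph_adj_rung _) <|
    .cons (eqGraph_adj_v_spoke hy).symm <| .cons (eqGraph_adj_rung 0).symm .nil) <| by
    simp [Walk.isCycle_def, Walk.isTrail_def, Fin.succ_ne_zero, (Fin.succ_ne_zero _).symm]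

lemma eqGraph_reachable_u_zero (v : Bool × Fin (b + 1)) :
    (eqGraph b x x).Reachable v (false, 0) := by
  have reachable_u (j : Fin (b + 1)) : (eqGraph b x x).Reachable (false, j) (false, 0) := by
    induction j using Fin.cases with
    | zero => rfl
    | succ i =>
      cases hx : x i
      · exact (eqGraph_adj_rung _).reachable.trans <|
          (eqGraph_adj_v_spoke hx).symm.reachable.trans (eqGraph_adj_rung 0).symm.reachable
      · exact (eqGraph_adj_u_spoke hx).symm.reachable
  obtain ⟨_ | _, j⟩ := v
  · exact reachable_u j
  · exact (eqGraph_adj_rung j).symm.reachable.trans (reachable_u j)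

lemma eqGraph_connected : (eqGraph b x x).Connected :=
  .mk fun u v => (eqGraph_reachable_u_zero u).trans (eqGraph_reachable_u_zero v).symm

/-- The spoke of index `i` of `G(x,x)` lies on the `u`-side (`false`) when `x i = 1` and on the
`v`-side (`true`) when `x i = 0`. -/
def eqGraphEdge (x : Fin b → Bool) : Fin b ⊕ Fin (b + 1) → Sym2 (Bool × Fin (b + 1))
  | .inl i => s((!x i, 0), (!x i, i.succ))
  | .inr j => s((false, j), (true, j))

lemma eqGraphEdge_injective : Function.Injective (eqGraphEdge x) := by
  rintro (i | i) (j | j) h <;> grind [eqGraphEdge, Fin.succ_ne_zero, Sym2.eq_iff]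

lemma eqGraphEdge_mem_edgeSet (k : Fin b ⊕ Fin (b + 1)) :
    eqGraphEdge x k ∈ (eqGraph b x x).edgeSet := by
  rcases k with i | j
  · cases hx : x i
    · simpa [eqGraphEdge, hx] using eqGraph_adj_v_spoke hx
    · simpa [eqGraphEdge, hx] using eqGraph_adj_u_spoke hx
  · exact eqGraph_adj_rung j

lemma eqGraph_edgeSet : (eqGraph b x x).edgeSet = Set.range (eqGraphEdge x) := by
  refine Set.Subset.antisymm (fun e he => ?_) (Set.range_subset_iff.2 eqGraphEdge_mem_edgeSet)
  induction e using Sym2.ind with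
  | _ a c =>
  rw [mem_edgeSet, eqGraph, fromRel_adj] at he
  rcases he with ⟨-, (⟨i, rfl, rfl, h⟩ | ⟨i, rfl, rfl, h⟩ | ⟨j, rfl, rfl⟩) |
    (⟨i, rfl, rfl, h⟩ | ⟨i, rfl, rfl, h⟩ | ⟨j, rfl, rfl⟩)⟩
  all_goals first
    | exact ⟨.inl i, by simp [eqGraphEdge, h, Sym2.eq_swap]⟩
    | exact ⟨.inr j, by simp [eqGraphEdge, Sym2.eq_swap]⟩

lemma eqGraph_card_edgeSet : Nat.card (eqGraph b x x).edgeSet = 2 * b + 1 := by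
  rw [eqGraph_edgeSet, Nat.card_range_of_injective eqGraphEdge_injective, Nat.card_sum,
    Nat.card_fin, Nat.card_fin]
  ring

/-- `G(x,y)` is a spanning tree on its `2b+2` vertices iff `x = y`. -/
theorem stmt_7 (b : ℕ) (x y : Fin b → Bool) :
    (eqGraph b x y).IsTree ↔ x = y := by
  refine ⟨fun hT => funext fun i => ?_, ?_⟩
  · cases hx : x i <;> cases hy : y i
    · rfl
    · exact absurd hT.connected (eqGraph_not_connected hx hy)
    · exact absurd hT.isAcyclic (eqGraph_not_isAcyclic hx hy)
    · rfl
  · rintro rfl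
    refine isTree_iff_connected_and_card.2 ⟨eqGraph_connected, ?_⟩
    rw [eqGraph_card_edgeSet, Nat.card_prod, Nat.card_fin, Nat.card_eq_fintype_card,
      Fintype.card_bool]
    ring
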